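/- Let φ be Euler's totient and q a prime. For any positive integer n ≥ 2, q² divides φ(n) if and only if one of the following holds: q³ divides n; there exist two distinct primes p₁ ≠ p₂ dividing n with p₁ ≡ p₂ ≡ 1 (mod q); q² divides n and some prime p ≡ 1 (mod q) divides n; or some prime p ≡ 1 (mod q²) divides n. -/
import Mathlib

open Finset

private lemma totient_fact (n q : ℕ) (hn : n ≠ 0) :
    (Nat.totient n).factorization q =
      (if q ∈ n.primeFactors then n.factorization q - 1 else 0) +
        ∑ p ∈ n.primeFactors, (p - 1).factorization q := by
  rw [Nat.totient_eq_prod_factorization hn, Finsupp.prod]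
  rw [Nat.support_factorization]
  rw [Nat.factorization_prod (fun p hp => by
    have hp' := (Nat.prime_of_mem_primeFactors hp).two_le
    have h1 : p - 1 ≠ 0 := by omega
    exact Nat.mul_ne_zero (pow_ne_zero _ (by omega)) h1)]
  rw [Finsupp.finset_sum_apply]
  have : ∀ p ∈ n.primeFactors,
      (p ^ (n.factorization p - 1) * (p - 1)).factorization q =
      (if p = q then n.factorization p - 1 else 0) + (p - 1).factorization q := by
    intro p hp
    have hp' := Nat.prime_of_mem_primeFactors hp
    have hp2 := hp'.two_le
    rw [Nat.factorization_mul (pow_ne_zero _ (by omega)) (by omega)]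
    rw [Nat.Prime.factorization_pow hp']
    simp only [Finsupp.add_apply, Finsupp.single_apply]

  rw [Finset.sum_congr rfl this, Finset.sum_add_distrib, Finset.sum_ite_eq' n.primeFactors q]

theorem q_sq_dvd_totient_iff (q n : ℕ) (hq : q.Prime) (hn : 2 ≤ n) :
    q ^ 2 ∣ Nat.totient n ↔
      q ^ 3 ∣ n ∨
      (∃ p₁ p₂ : ℕ, p₁.Prime ∧ p₂.Prime ∧ p₁ ≠ p₂ ∧
        p₁ ≡ 1 [MOD q] ∧ p₂ ≡ 1 [MOD q] ∧ p₁ ∣ n ∧ p₂ ∣ n) ∨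
      (q ^ 2 ∣ n ∧ ∃ p : ℕ, p.Prime ∧ p ≡ 1 [MOD q] ∧ p ∣ n) ∨
      (∃ p : ℕ, p.Prime ∧ p ≡ 1 [MOD q ^ 2] ∧ p ∣ n) := by
  have hn0 : n ≠ 0 := by omega
  have hφ : Nat.totient n ≠ 0 := (Nat.totient_pos.mpr (by omega)).ne'
  -- modEq translations
  have hmod : ∀ (p m : ℕ), p.Prime → (p ≡ 1 [MOD m] ↔ m ∣ p - 1) := by
    intro p m hp
    rw [Nat.ModEq.comm, Nat.modEq_iff_dvd' hp.one_lt.le]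
  constructor
  · intro h
    rw [hq.pow_dvd_iff_le_factorization hφ, totient_fact n q hn0] at h
    by_cases h4 : ∃ p ∈ n.primeFactors, 2 ≤ (p - 1).factorization q
    · obtain ⟨p, hp, hp2⟩ := h4
      have hpp := Nat.prime_of_mem_primeFactors hp
      refine Or.inr (Or.inr (Or.inr ⟨p, hpp, ?_, Nat.dvd_of_mem_primeFactors hp⟩))
      rw [hmod p (q ^ 2) hpp]
      exact (hq.pow_dvd_iff_le_factorization (by have := hpp.two_le; omega)).mpr hp2
    push_neg at h4
    by_cases h2 : ∃ p₁ ∈ n.primeFactors, ∃ p₂ ∈ n.primeFactors,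
        p₁ ≠ p₂ ∧ 1 ≤ (p₁ - 1).factorization q ∧ 1 ≤ (p₂ - 1).factorization q
    · obtain ⟨p₁, hp₁, p₂, hp₂, hne, h1, h2⟩ := h2
      have hq1 := Nat.prime_of_mem_primeFactors hp₁
      have hq2 := Nat.prime_of_mem_primeFactors hp₂
      refine Or.inr (Or.inl ⟨p₁, p₂, hq1, hq2, hne, ?_, ?_,
        Nat.dvd_of_mem_primeFactors hp₁, Nat.dvd_of_mem_primeFactors hp₂⟩)
      · rw [hmod p₁ q hq1]
        simpa using (hq.pow_dvd_iff_le_factorization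
          (by have := hq1.two_le; omega) (k := 1)).mpr h1
      · rw [hmod p₂ q hq2]
        simpa using (hq.pow_dvd_iff_le_factorization
          (by have := hq2.two_le; omega) (k := 1)).mpr h2
    push_neg at h2
    by_cases h1 : ∃ p ∈ n.primeFactors, 1 ≤ (p - 1).factorization q
    · obtain ⟨p, hp, hp1⟩ := h1
      have hpp := Nat.prime_of_mem_primeFactors hp
      have hsum : ∑ r ∈ n.primeFactors, (r - 1).factorization q
          = (p - 1).factorization q := by
        refine Finset.sum_eq_single_of_mem p hp ?_
        intro r hr hrp
        by_contra hc
        have := h2 p hp r hr (fun h => hrp h.symm) hp1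
        omega
      have hple : (p - 1).factorization q ≤ 1 := by have := h4 p hp; omega
      rw [hsum] at h
      have hE : 1 ≤ (if q ∈ n.primeFactors then n.factorization q - 1 else 0) := by omega
      have hqmem : q ∈ n.primeFactors := by
        by_contra hc; simp [hc] at hE
      rw [if_pos hqmem] at hE
      refine Or.inr (Or.inr (Or.inl ⟨?_, p, hpp, ?_, Nat.dvd_of_mem_primeFactors hp⟩))
      · exact (hq.pow_dvd_iff_le_factorization hn0).mpr (by omega)
      · rw [hmod p q hpp]
        simpa using (hq.pow_dvd_iff_le_factorization
          (by have := hpp.two_le; omega) (k := 1)).mpr hp1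
    push_neg at h1
    have hsum : ∑ r ∈ n.primeFactors, (r - 1).factorization q = 0 :=
      Finset.sum_eq_zero fun r hr => by have := h1 r hr; omega
    rw [hsum] at h
    have hqmem : q ∈ n.primeFactors := by
      by_contra hc; simp [hc] at h
    rw [if_pos hqmem] at h
    exact Or.inl ((hq.pow_dvd_iff_le_factorization hn0).mpr (by omega))
  · rintro (h | ⟨p₁, p₂, hp₁, hp₂, hne, hm₁, hm₂, hd₁, hd₂⟩ |
      ⟨hq2, p, hp, hm, hd⟩ | ⟨p, hp, hm, hd⟩)
    · refine dvd_trans ?_ (Nat.totient_dvd_of_dvd h)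
      rw [Nat.totient_prime_pow hq (by norm_num)]
      exact Dvd.dvd.mul_right (by norm_num) _
    · have hcop : Nat.Coprime p₁ p₂ := (Nat.coprime_primes hp₁ hp₂).mpr hne
      refine dvd_trans ?_ (Nat.totient_dvd_of_dvd (hcop.mul_dvd_of_dvd_of_dvd hd₁ hd₂))
      rw [Nat.totient_mul hcop, Nat.totient_prime hp₁, Nat.totient_prime hp₂, pow_two]
      exact mul_dvd_mul ((hmod p₁ q hp₁).mp hm₁) ((hmod p₂ q hp₂).mp hm₂)
    · have hdvd : q ∣ p - 1 := (hmod p q hp).mp hm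
      have hpq : p ≠ q := by
        rintro rfl
        have h1 := Nat.le_of_dvd (by have := hp.two_le; omega) hdvd
        have := hq.two_le
        omega
      have hcop : Nat.Coprime (q ^ 2) p :=
        Nat.Coprime.pow_left _ ((Nat.coprime_primes hq hp).mpr (Ne.symm hpq))
      refine dvd_trans ?_ (Nat.totient_dvd_of_dvd (hcop.mul_dvd_of_dvd_of_dvd hq2 hd))
      rw [Nat.totient_mul hcop, Nat.totient_prime hp,
        Nat.totient_prime_pow hq (by norm_num)]
      have h21 : q ^ (2 - 1) = q := pow_one q
      rw [h21, pow_two, mul_assoc]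
      exact mul_dvd_mul dvd_rfl (Dvd.dvd.mul_left hdvd _)
    · refine dvd_trans ?_ (Nat.totient_dvd_of_dvd hd)
      rw [Nat.totient_prime hp]
      exact (hmod p (q ^ 2) hp).mp hm
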